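/- Let J₀ be a two-sided p-periodic Jacobi matrix with parameters (a⁰,b⁰) and p ≥ 2, and let J = J(a,b) be a half-line Jacobi operator with bounded parameters. Suppose Δ_{J₀}(J) − S^p − S^{−p} is Hilbert–Schmidt, i.e., Σ_{k,ℓ≥1} |(Δ_{J₀}(J) − S^p − S^{−p})_{kℓ}|² < ∞. Then: Σ_{n≥1} (a_n a_{n+1} ⋯ a_{n+p−1} − a⁰_n a⁰_{n+1} ⋯ a⁰_{n+p−1})² < ∞; Σ_{n≥1} (Σ_{j=0}^{p−1} (b_{n+j} − b⁰_{n+j}))² < ∞; Σ_{n≥1} (a_{n+p} − a_n)² < ∞; and Σ_{n≥1} (b_{n+p} − b_n)² < ∞. -/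

import Mathlib

open scoped ComplexConjugate

noncomputable section

/-- The half-line Hilbert space `ℓ²({1,2,…})`, realized inside `ℓ²(ℕ)` with
site `0` playing no role. -/
abbrev HN : Type := lp (fun _ : ℕ => ℂ) 2

/-- The standard basis vectors. -/
def deltaN (k : ℕ) : HN := lp.single 2 k 1

/-- Matrix entries `A_{kℓ} = ⟨δ_k, A δ_ℓ⟩`. -/
def entryN (A : HN →L[ℂ] HN) (k l : ℕ) : ℂ := inner ℂ (deltaN k) (A (deltaN l))

/-- `J` acts as the half-line Jacobi operator with parameters `(a,b)`. -/
def IsHalfJacobi (a b : ℕ → ℝ) (J : HN →L[ℂ] HN) : Prop :=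
  ∀ u : HN, (J u) 0 = 0 ∧
    (J u) 1 = (b 1 : ℂ) * u 1 + (a 1 : ℂ) * u 2 ∧
    ∀ n : ℕ, 2 ≤ n →
      (J u) n = (a (n - 1) : ℂ) * u (n - 1) + (b n : ℂ) * u n + (a n : ℂ) * u (n + 1)

/-- `S` acts as the half-line right shift: `(Su)_1 = 0`, `(Su)_{n+1} = u_n` for
`n ≥ 1`; site `0` is annihilated. -/
def IsHalfShift (S : HN →L[ℂ] HN) : Prop :=
  ∀ u : HN, (S u) 0 = 0 ∧ (S u) 1 = 0 ∧ ∀ n : ℕ, 1 ≤ n → (S u) (n + 1) = u n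

/-- The transfer matrix `Λ_n(x) = (1/a_n)·[[x − b_n, −1], [a_n², 0]]`. -/
def lamMat (a b : ℤ → ℝ) (n : ℤ) : Matrix (Fin 2) (Fin 2) (Polynomial ℝ) :=
  Polynomial.C (a n)⁻¹ • !![Polynomial.X - Polynomial.C (b n), -1;
    Polynomial.C ((a n) ^ 2), 0]

/-- The ordered product `Λ_n ⋯ Λ_2 Λ_1`. -/
def tMat (a b : ℤ → ℝ) : ℕ → Matrix (Fin 2) (Fin 2) (Polynomial ℝ)
  | 0 => 1
  | n + 1 => lamMat a b ((n : ℤ) + 1) * tMat a b n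

/-- The discriminant `Δ_{(a,b)}(x) = Tr(Λ_p(x) ⋯ Λ_1(x))`. -/
def disc (a b : ℤ → ℝ) (p : ℕ) : Polynomial ℝ := Matrix.trace (tMat a b p)

/-- Evaluation of a real polynomial at a bounded operator. -/
def polyOpN (q : Polynomial ℝ) (A : HN →L[ℂ] HN) : HN →L[ℂ] HN :=
  Polynomial.aeval A (q.map (algebraMap ℝ ℂ))

/-!
On the `p`-th superdiagonal, `Δ_{J₀}(J) − S^p − S^{−p}` has entries
`a_k ⋯ a_{k+p−1} / (a⁰_1 ⋯ a⁰_p) − 1`: `Δ_{J₀}` has degree `p` and leading coefficient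
`1 / (a⁰_1 ⋯ a⁰_p)`, and the only `p`-step path of `J` from `k` to `k + p` goes straight up.
On the `(p−1)`-st superdiagonal the same path count, with the subleading coefficient
`−(b⁰_1 + ⋯ + b⁰_p) / (a⁰_1 ⋯ a⁰_p)`, gives
`a_k ⋯ a_{k+p−2} · Σ_j (b_{k+j} − b⁰_{1+j}) / (a⁰_1 ⋯ a⁰_p)`.
Square-summability of these two diagonals gives the first claim, and the second because the
partial products `a_k ⋯ a_{k+p−2}` are eventually bounded away from `0` (the full products tend to
`a⁰_1 ⋯ a⁰_p ≠ 0` and `a` is bounded); periodicity makes the windows of `a⁰`, `b⁰` constant.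
The last two claims follow by subtracting consecutive windows.
-/

open Finset Filter Topology Polynomial

lemma deltaN_apply (k n : ℕ) : deltaN k n = if n = k then 1 else 0 := by
  simp [deltaN, lp.single_apply, Pi.single_apply]

lemma entryN_eq_apply (A : HN →L[ℂ] HN) (k l : ℕ) : entryN A k l = A (deltaN l) k := by
  simpa [entryN, deltaN] using lp.inner_single_left (𝕜 := ℂ) k (1 : ℂ) (A (deltaN l))

lemma entryN_sub (A B : HN →L[ℂ] HN) (k l : ℕ) :
    entryN (A - B) k l = entryN A k l - entryN B k l := by
  simp [entryN]

lemma entryN_adjoint (A : HN →L[ℂ] HN) (k l : ℕ) :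
    entryN (ContinuousLinearMap.adjoint A) k l = conj (entryN A l k) := by
  rw [entryN, entryN, ContinuousLinearMap.adjoint_inner_right, inner_conj_symm]

lemma entryN_polyOpN (q : ℝ[X]) {n : ℕ} (hq : q.natDegree < n) (J : HN →L[ℂ] HN)
    (k l : ℕ) :
    entryN (polyOpN q J) k l = ∑ i ∈ range n, (q.coeff i : ℂ) * entryN (J ^ i) k l := by
  rw [polyOpN, aeval_eq_sum_range' ((natDegree_map_le).trans_lt hq), entryN,
    _root_.sum_apply, inner_sum]
  refine sum_congr rfl fun i _ => ?_
  rw [_root_.smul_apply, coeff_map, inner_smul_right]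
  rfl

section Jacobi

variable {a b : ℕ → ℝ} {J : HN →L[ℂ] HN}

lemma IsHalfJacobi.apply_succ (hJ : IsHalfJacobi a b J) {u : HN} (hu : u 0 = 0) (k : ℕ) :
    J u (k + 1) = a k * u k + b (k + 1) * u (k + 1) + a (k + 1) * u (k + 2) := by
  obtain ⟨-, h1, h2⟩ := hJ u
  rcases k with _ | k
  · simp [h1, hu]
  · exact h2 (k + 2) (by omega)

lemma IsHalfJacobi.pow_apply_deltaN_zero (hJ : IsHalfJacobi a b J) (m : ℕ) {l : ℕ}
    (hl : l ≠ 0) :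
    (J ^ m) (deltaN l) 0 = 0 := by
  rcases m with _ | m
  · simp [deltaN_apply, Ne.symm hl]
  · rw [pow_succ', mul_apply_eq_comp]
    exact (hJ _).1

lemma IsHalfJacobi.entryN_pow_succ (hJ : IsHalfJacobi a b J) (m k : ℕ) {l : ℕ} (hl : l ≠ 0) :
    entryN (J ^ (m + 1)) (k + 1) l = a k * entryN (J ^ m) k l
      + b (k + 1) * entryN (J ^ m) (k + 1) l + a (k + 1) * entryN (J ^ m) (k + 2) l := by
  simp only [entryN_eq_apply, pow_succ' J m, mul_apply_eq_comp]
  exact hJ.apply_succ (hJ.pow_apply_deltaN_zero m hl) k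

lemma IsHalfJacobi.entryN_pow_eq_zero (hJ : IsHalfJacobi a b J) (m : ℕ) {k l : ℕ}
    (h : k + m < l) : entryN (J ^ m) k l = 0 := by
  induction m generalizing k with
  | zero => simp [entryN_eq_apply, deltaN_apply]; omega
  | succ m ih =>
    rcases k with _ | k
    · rw [entryN_eq_apply, pow_succ', mul_apply_eq_comp]
      exact (hJ _).1
    · rw [hJ.entryN_pow_succ m k (by omega), ih (by omega), ih (by omega), ih (by omega)]
      ring

lemma IsHalfJacobi.entryN_pow_add_self (hJ : IsHalfJacobi a b J) (m k : ℕ) :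
    entryN (J ^ m) (k + 1) (k + 1 + m) = ∏ j ∈ range m, (a (k + 1 + j) : ℂ) := by
  induction m generalizing k with
  | zero => simp [entryN_eq_apply, deltaN_apply]
  | succ m ih =>
    rw [hJ.entryN_pow_succ m k (by omega), hJ.entryN_pow_eq_zero m (by omega),
      hJ.entryN_pow_eq_zero m (by omega), show k + 1 + (m + 1) = k + 1 + 1 + m by ring, ih,
      prod_range_succ']
    simp only [add_assoc, add_comm 1, add_zero]
    ring

lemma IsHalfJacobi.entryN_pow_succ_add_self (hJ : IsHalfJacobi a b J) (m k : ℕ) :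
    entryN (J ^ (m + 1)) (k + 1) (k + 1 + m) =
      (∏ j ∈ range m, (a (k + 1 + j) : ℂ)) *
        ∑ j ∈ range (m + 1), (b (k + 1 + j) : ℂ) := by
  induction m generalizing k with
  | zero =>
    rw [hJ.entryN_pow_succ 0 k (by omega)]
    simp [entryN_eq_apply, deltaN_apply]
  | succ m ih =>
    rw [hJ.entryN_pow_succ (m + 1) k (by omega), hJ.entryN_pow_eq_zero (m + 1) (by omega),
      hJ.entryN_pow_add_self, show k + 1 + (m + 1) = k + 1 + 1 + m by ring, ih,
      prod_range_succ', sum_range_succ' _ (m + 1)]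
    simp only [add_assoc, add_comm 1, add_zero]
    ring

lemma IsHalfJacobi.entryN_polyOpN_add_self (hJ : IsHalfJacobi a b J) (q : ℝ[X]) {n : ℕ}
    (hq : q.natDegree ≤ n) (k : ℕ) :
    entryN (polyOpN q J) (k + 1) (k + 1 + n) =
      q.coeff n * ∏ j ∈ range n, (a (k + 1 + j) : ℂ) := by
  rw [entryN_polyOpN q (Nat.lt_succ_of_le hq), sum_range_succ, hJ.entryN_pow_add_self,
    sum_eq_zero fun i hi => by rw [hJ.entryN_pow_eq_zero i (by simp at hi; omega), mul_zero],
    zero_add]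

lemma IsHalfJacobi.entryN_polyOpN_add_pred (hJ : IsHalfJacobi a b J) (q : ℝ[X]) {n : ℕ}
    (hq : q.natDegree ≤ n + 1) (k : ℕ) :
    entryN (polyOpN q J) (k + 1) (k + 1 + n) = (∏ j ∈ range n, (a (k + 1 + j) : ℂ)) *
      (q.coeff (n + 1) * ∑ j ∈ range (n + 1), (b (k + 1 + j) : ℂ) + q.coeff n) := by
  rw [entryN_polyOpN q (Nat.lt_succ_of_le hq), sum_range_succ, sum_range_succ,
    hJ.entryN_pow_succ_add_self, hJ.entryN_pow_add_self,
    sum_eq_zero fun i hi => by rw [hJ.entryN_pow_eq_zero i (by simp at hi; omega), mul_zero],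
    zero_add]
  ring

end Jacobi

section Shift

variable {S : HN →L[ℂ] HN}

lemma IsHalfShift.apply_deltaN (hS : IsHalfShift S) {l : ℕ} (hl : l ≠ 0) :
    S (deltaN l) = deltaN (l + 1) := by
  ext n
  obtain ⟨h0, h1, h2⟩ := hS (deltaN l)
  rcases n with _ | _ | n
  · simp [h0, deltaN_apply]
  · simp [h1, deltaN_apply]; omega
  · simp [h2 (n + 1) (by omega), deltaN_apply]

lemma IsHalfShift.pow_apply_deltaN (hS : IsHalfShift S) (m : ℕ) {l : ℕ} (hl : l ≠ 0) :
    (S ^ m) (deltaN l) = deltaN (l + m) := by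
  induction m with
  | zero => rfl
  | succ m ih => rw [pow_succ', mul_apply_eq_comp, ih, hS.apply_deltaN (by omega), add_assoc]

lemma IsHalfShift.entryN_pow (hS : IsHalfShift S) (m k : ℕ) {l : ℕ} (hl : l ≠ 0) :
    entryN (S ^ m) k l = if k = l + m then 1 else 0 := by
  rw [entryN_eq_apply, hS.pow_apply_deltaN m hl, deltaN_apply]

lemma IsHalfShift.entryN_adjoint_pow (hS : IsHalfShift S) (m : ℕ) {k : ℕ} (hk : k ≠ 0)
    (l : ℕ) :
    entryN (ContinuousLinearMap.adjoint S ^ m) k l = if l = k + m then 1 else 0 := by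
  rw [← ContinuousLinearMap.star_eq_adjoint, ← star_pow, ContinuousLinearMap.star_eq_adjoint,
    entryN_adjoint, hS.entryN_pow m l hk]
  split_ifs <;> simp

end Shift

section Discriminant

variable (a0 b0 : ℤ → ℝ)

lemma tMat_succ_zero_apply (n : ℕ) (j : Fin 2) :
    tMat a0 b0 (n + 1) 0 j = C (a0 (n + 1))⁻¹ *
      ((X - C (b0 (n + 1))) * tMat a0 b0 n 0 j - tMat a0 b0 n 1 j) := by
  simp [tMat, lamMat, Matrix.mul_apply, Fin.sum_univ_two]
  ring

lemma tMat_succ_one_apply (n : ℕ) (j : Fin 2) :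
    tMat a0 b0 (n + 1) 1 j = C ((a0 (n + 1))⁻¹ * a0 (n + 1) ^ 2) * tMat a0 b0 n 0 j := by
  simp [tMat, lamMat, Matrix.mul_apply, Fin.sum_univ_two]

lemma tMat_coeff_col_one (n : ℕ) :
    (∀ i, n ≤ i → (tMat a0 b0 n 0 1).coeff i = 0) ∧
      ∀ i, n < i → (tMat a0 b0 n 1 1).coeff i = 0 := by
  induction n with
  | zero =>
    refine ⟨fun i _ => by simp [tMat], fun i hi => ?_⟩
    simp [tMat, coeff_one]; omega
  | succ n ih =>
    refine ⟨fun i hi => ?_, fun i hi => ?_⟩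
    · obtain ⟨i, rfl⟩ : ∃ i', i = i' + 1 := ⟨i - 1, by omega⟩
      simp only [tMat_succ_zero_apply, coeff_C_mul, sub_mul, coeff_sub, coeff_X_mul, coeff_C_mul,
        ih.1 i (by omega), ih.1 (i + 1) (by omega), ih.2 (i + 1) (by omega)]
      ring
    · rw [tMat_succ_one_apply, coeff_C_mul, ih.1 i (by omega), mul_zero]

lemma tMat_coeff_col_zero (n : ℕ) :
    (∀ i, n < i → (tMat a0 b0 n 0 0).coeff i = 0) ∧
      (tMat a0 b0 n 0 0).coeff n = (∏ j ∈ range n, a0 (j + 1))⁻¹ ∧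
      ∀ i, n ≤ i → (tMat a0 b0 n 1 0).coeff i = 0 := by
  induction n with
  | zero =>
    refine ⟨fun i hi => ?_, by simp [tMat], fun i _ => by simp [tMat]⟩
    simp [tMat, coeff_one]; omega
  | succ n ih =>
    obtain ⟨htop, hlead, hbot⟩ := ih
    refine ⟨fun i hi => ?_, ?_, fun i hi => ?_⟩
    · obtain ⟨i, rfl⟩ : ∃ i', i = i' + 1 := ⟨i - 1, by omega⟩
      simp only [tMat_succ_zero_apply, coeff_C_mul, sub_mul, coeff_sub, coeff_X_mul, coeff_C_mul,
        htop i (by omega), htop (i + 1) (by omega), hbot (i + 1) (by omega)]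
      ring
    · simp only [tMat_succ_zero_apply, coeff_C_mul, sub_mul, coeff_sub, coeff_X_mul, coeff_C_mul,
        hlead, htop (n + 1) (by omega), hbot (n + 1) (by omega), prod_range_succ, mul_inv]
      ring
    · rw [tMat_succ_one_apply, coeff_C_mul, htop i (by omega), mul_zero]

lemma tMat_succ_coeff_zero_zero_self (n : ℕ) :
    (tMat a0 b0 (n + 1) 0 0).coeff n =
      -(∑ j ∈ range (n + 1), b0 (j + 1)) * (∏ j ∈ range (n + 1), a0 (j + 1))⁻¹ := by
  induction n with
  | zero => simp [lamMat, tMat, coeff_C, mul_comm]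
  | succ n ih =>
    obtain ⟨-, hlead, hbot⟩ := tMat_coeff_col_zero a0 b0 (n + 1)
    rw [tMat_succ_zero_apply]
    simp only [coeff_C_mul, sub_mul, coeff_sub, coeff_X_mul, coeff_C_mul, ih, hlead,
      hbot (n + 1) le_rfl, prod_range_succ _ (n + 1), sum_range_succ _ (n + 1), mul_inv]
    push_cast
    ring

lemma tMat_succ_coeff_one_one (n : ℕ) {i : ℕ} (hi : n ≤ i) :
    (tMat a0 b0 (n + 1) 1 1).coeff i = 0 := by
  rw [tMat_succ_one_apply, coeff_C_mul, (tMat_coeff_col_one a0 b0 n).1 i hi, mul_zero]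

lemma disc_eq (n : ℕ) : disc a0 b0 n = tMat a0 b0 n 0 0 + tMat a0 b0 n 1 1 := by
  simp [disc, Matrix.trace, Fin.sum_univ_two]

lemma disc_natDegree_le (n : ℕ) : (disc a0 b0 n).natDegree ≤ n := by
  rw [natDegree_le_iff_coeff_eq_zero]
  intro i hi
  rw [disc_eq, coeff_add, (tMat_coeff_col_zero a0 b0 n).1 i hi,
    (tMat_coeff_col_one a0 b0 n).2 i hi, add_zero]

lemma disc_succ_coeff_succ (n : ℕ) :
    (disc a0 b0 (n + 1)).coeff (n + 1) = (∏ j ∈ range (n + 1), a0 (j + 1))⁻¹ := by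
  rw [disc_eq, coeff_add, (tMat_coeff_col_zero a0 b0 (n + 1)).2.1,
    tMat_succ_coeff_one_one a0 b0 n (by omega), add_zero]

lemma disc_succ_coeff_self (n : ℕ) :
    (disc a0 b0 (n + 1)).coeff n =
      -(∑ j ∈ range (n + 1), b0 (j + 1)) * (∏ j ∈ range (n + 1), a0 (j + 1))⁻¹ := by
  rw [disc_eq, coeff_add, tMat_succ_coeff_zero_zero_self, tMat_succ_coeff_one_one a0 b0 n le_rfl,
    add_zero]

end Discriminant

@[to_additive]
lemma Function.Periodic.prod_range_add_one {M : Type*} [CommMonoid M] {f : ℤ → M} {p : ℕ}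
    (hf : Function.Periodic f p) (c : ℤ) :
    ∏ j ∈ range p, f (c + 1 + j) = ∏ j ∈ range p, f (c + j) := by
  rcases p with _ | p
  · simp
  rw [prod_range_succ, prod_range_succ' (fun j : ℕ => f (c + j))]
  have hp : f (c + 1 + p) = f (c + 0) := by rw [add_zero, ← hf c]; push_cast; ring_nf
  rw [hp]
  congr 1
  refine prod_congr rfl fun j _ => ?_
  push_cast
  ring_nf

@[to_additive]
lemma Function.Periodic.prod_range_add {M : Type*} [CommMonoid M] {f : ℤ → M} {p : ℕ}
    (hf : Function.Periodic f p) (c : ℤ) :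
    ∏ j ∈ range p, f (c + j) = ∏ j ∈ range p, f j := by
  induction c using Int.induction_on with
  | zero => simp
  | succ c ih => rw [hf.prod_range_add_one, ih]
  | pred c ih => rw [← ih, ← hf.prod_range_add_one, sub_add_cancel]

lemma summable_sq_sub_succ {x : ℕ → ℝ} (hx : Summable fun k => x k ^ 2) :
    Summable fun k => (x (k + 1) - x k) ^ 2 := by
  refine .of_nonneg_of_le (fun k => sq_nonneg _) (fun k => ?_)
    ((((summable_nat_add_iff 1).mpr hx).mul_left 2).add (hx.mul_left 2))
  nlinarith [sq_nonneg (x (k + 1) + x k)]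

lemma tendsto_of_summable_sq_sub {x : ℕ → ℝ} {c : ℝ}
    (hx : Summable fun k => (x k - c) ^ 2) :
    Tendsto x atTop (𝓝 c) := by
  have h := (hx.tendsto_atTop_zero.sqrt).congr fun k => Real.sqrt_sq_eq_abs (x k - c)
  rw [Real.sqrt_zero] at h
  exact tendsto_iff_norm_sub_tendsto_zero.mpr h

lemma summable_sq_of_summable_sq_mul {F G v : ℕ → ℝ} {A C : ℝ}
    (hF : Tendsto F atTop (𝓝 A)) (hA : A ≠ 0) (hFG : ∀ k, |F k| ≤ C * |G k|)
    (h : Summable fun k => (G k * v k) ^ 2) :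
    Summable fun k => v k ^ 2 := by
  have hlow : ∀ᶠ k in atTop, |A| / 2 ≤ |F k| :=
    hF.abs.eventually (eventually_ge_nhds (half_lt_self (abs_pos.mpr hA)))
  refine .of_norm_bounded_eventually_nat (h.mul_left ((2 * C / |A|) ^ 2)) ?_
  filter_upwards [hlow] with k hk
  have : |A| / 2 * |v k| ≤ C * |G k * v k| := by
    rw [abs_mul, ← mul_assoc]
    exact mul_le_mul_of_nonneg_right (hk.trans (hFG k)) (abs_nonneg _)
  have hsq := pow_le_pow_left₀ (by positivity) this 2
  rw [mul_pow, mul_pow, sq_abs, sq_abs] at hsq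
  rw [Real.norm_of_nonneg (sq_nonneg _), div_pow, div_mul_eq_mul_div,
    le_div_iff₀ (by positivity)]
  nlinarith [hsq]

lemma summable_sq_sub_add_of_summable_sq_sum_sub {b : ℕ → ℝ} {p : ℕ} {B : ℝ}
    (h : Summable fun k => (∑ j ∈ range p, b (k + 1 + j) - B) ^ 2) :
    Summable fun k => (b (k + 1 + p) - b (k + 1)) ^ 2 := by
  refine (summable_sq_sub_succ h).congr fun k => ?_
  have hshift : ∑ j ∈ range p, b (k + 1 + 1 + j) + b (k + 1) =
      ∑ j ∈ range p, b (k + 1 + j) + b (k + 1 + p) := by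
    rw [← sum_range_succ, sum_range_succ', add_zero]
    simp only [add_assoc, add_comm 1]
  rw [sub_sub_sub_cancel_right]
  congr 1
  linarith

lemma abs_prod_range_succ_le {a : ℕ → ℝ} {C : ℝ} (hC : ∀ n, |a n| ≤ C) (m k : ℕ) :
    |∏ j ∈ range (m + 1), a (k + j)| ≤ C * |∏ j ∈ range m, a (k + j)| := by
  rw [prod_range_succ, abs_mul, mul_comm C]
  exact mul_le_mul_of_nonneg_left (hC _) (abs_nonneg _)

lemma summable_sq_sub_add_of_summable_sq_prod_sub {a : ℕ → ℝ} {C A : ℝ}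
    (hC : ∀ n, |a n| ≤ C) (hA : A ≠ 0) {m : ℕ}
    (h : Summable fun k => (∏ j ∈ range (m + 1), a (k + 1 + j) - A) ^ 2) :
    Summable fun k => (a (k + 1 + (m + 1)) - a (k + 1)) ^ 2 := by
  have hF := (tendsto_of_summable_sq_sub h).comp (tendsto_add_atTop_nat 1)
  refine summable_sq_of_summable_sq_mul hF hA (fun k => abs_prod_range_succ_le hC m _)
    ((summable_sq_sub_succ h).congr fun k => ?_)
  have hshift : ∏ j ∈ range m, a (k + 1 + (j + 1)) = ∏ j ∈ range m, a (k + 1 + 1 + j) :=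
    prod_congr rfl fun j _ => by rw [add_comm j, ← add_assoc]
  rw [sub_sub_sub_cancel_right, prod_range_succ, prod_range_succ', add_zero, hshift,
    add_right_comm k 1 1, add_assoc (k + 1) 1 m, add_comm 1 m]
  ring

lemma summable_sq_entryN_add {D : HN →L[ℂ] HN}
    (hD : Summable fun kl : ℕ × ℕ => ‖entryN D (kl.1 + 1) (kl.2 + 1)‖ ^ 2) (d : ℕ) :
    Summable fun k => ‖entryN D (k + 1) (k + 1 + d)‖ ^ 2 :=
  (hD.comp_injective (i := fun k => (k, k + d)) fun _ _ h => (Prod.ext_iff.mp h).1).congr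
    fun k => by simp [add_right_comm]

section HilbertSchmidt

variable {a b : ℕ → ℝ} {J S : HN →L[ℂ] HN} (a0 b0 : ℤ → ℝ)

def discRemainder (p : ℕ) (J S : HN →L[ℂ] HN) : HN →L[ℂ] HN :=
  polyOpN (disc a0 b0 p) J - S ^ p - ContinuousLinearMap.adjoint S ^ p

lemma entryN_discRemainder_add_succ (hJ : IsHalfJacobi a b J) (hS : IsHalfShift S)
    (m k : ℕ) :
    entryN (discRemainder a0 b0 (m + 1) J S) (k + 1) (k + 1 + (m + 1)) =
      ((∏ j ∈ range (m + 1), a (k + 1 + j)) * (∏ j ∈ range (m + 1), a0 (j + 1))⁻¹ - 1 :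
        ℝ) := by
  rw [discRemainder, entryN_sub, entryN_sub,
    hJ.entryN_polyOpN_add_self _ (disc_natDegree_le a0 b0 _), disc_succ_coeff_succ,
    hS.entryN_pow _ _ (by omega), hS.entryN_adjoint_pow _ (by omega), if_neg (by omega),
    if_pos rfl]
  push_cast
  ring

lemma entryN_discRemainder_add (hJ : IsHalfJacobi a b J) (hS : IsHalfShift S) (m k : ℕ) :
    entryN (discRemainder a0 b0 (m + 1) J S) (k + 1) (k + 1 + m) =
      ((∏ j ∈ range m, a (k + 1 + j)) *
        (∑ j ∈ range (m + 1), b (k + 1 + j) - ∑ j ∈ range (m + 1), b0 (j + 1)) *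
        (∏ j ∈ range (m + 1), a0 (j + 1))⁻¹ : ℝ) := by
  rw [discRemainder, entryN_sub, entryN_sub,
    hJ.entryN_polyOpN_add_pred _ (disc_natDegree_le a0 b0 _), disc_succ_coeff_succ,
    disc_succ_coeff_self, hS.entryN_pow _ _ (by omega), hS.entryN_adjoint_pow _ (by omega),
    if_neg (by omega), if_neg (by omega)]
  push_cast
  ring

variable {m : ℕ}

lemma summable_sq_prod_sub_of_hilbertSchmidt (hJ : IsHalfJacobi a b J) (hS : IsHalfShift S)
    (hHS : Summable fun kl : ℕ × ℕ =>
      ‖entryN (discRemainder a0 b0 (m + 1) J S) (kl.1 + 1) (kl.2 + 1)‖ ^ 2)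
    (hA : ∏ j ∈ range (m + 1), a0 (j + 1) ≠ 0) :
    Summable fun k =>
      (∏ j ∈ range (m + 1), a (k + 1 + j) - ∏ j ∈ range (m + 1), a0 (j + 1)) ^ 2 := by
  have h := summable_sq_entryN_add hHS (m + 1)
  simp only [entryN_discRemainder_add_succ a0 b0 hJ hS, Complex.norm_real, Real.norm_eq_abs,
    sq_abs] at h
  refine (h.mul_right ((∏ j ∈ range (m + 1), a0 (j + 1)) ^ 2)).congr fun k => ?_
  field_simp

lemma summable_sq_sum_sub_of_hilbertSchmidt (hJ : IsHalfJacobi a b J) (hS : IsHalfShift S)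
    (hHS : Summable fun kl : ℕ × ℕ =>
      ‖entryN (discRemainder a0 b0 (m + 1) J S) (kl.1 + 1) (kl.2 + 1)‖ ^ 2)
    (hA : ∏ j ∈ range (m + 1), a0 (j + 1) ≠ 0) {C : ℝ} (hC : ∀ n, |a n| ≤ C) :
    Summable fun k =>
      (∑ j ∈ range (m + 1), b (k + 1 + j) - ∑ j ∈ range (m + 1), b0 (j + 1)) ^ 2 := by
  have h := summable_sq_entryN_add hHS m
  simp only [entryN_discRemainder_add a0 b0 hJ hS, Complex.norm_real, Real.norm_eq_abs, sq_abs,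
    mul_pow _ _⁻¹] at h
  exact summable_sq_of_summable_sq_mul
    (tendsto_of_summable_sq_sub (summable_sq_prod_sub_of_hilbertSchmidt a0 b0 hJ hS hHS hA)) hA
    (fun k => abs_prod_range_succ_le hC m (k + 1))
    ((summable_mul_right_iff (pow_ne_zero 2 (inv_ne_zero hA))).mp h)

end HilbertSchmidt

theorem statement17_general (p : ℕ)
    (a0 b0 : ℤ → ℝ) (ha0pos : ∀ n, 0 < a0 n)
    (hpera : Function.Periodic a0 (p : ℤ)) (hperb : Function.Periodic b0 (p : ℤ))
    (a b : ℕ → ℝ) (hbdd : ∃ C : ℝ, ∀ n : ℕ, |a n| ≤ C ∧ |b n| ≤ C)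
    (J : HN →L[ℂ] HN) (hJ : IsHalfJacobi a b J)
    (S : HN →L[ℂ] HN) (hS : IsHalfShift S)
    (hHS : Summable (fun kl : ℕ × ℕ =>
      ‖entryN (polyOpN (disc a0 b0 p) J - S ^ p - (ContinuousLinearMap.adjoint S) ^ p)
        (kl.1 + 1) (kl.2 + 1)‖ ^ 2)) :
    Summable (fun n : ℕ =>
      ((∏ j ∈ Finset.range p, a (n + 1 + j)) -
        ∏ j ∈ Finset.range p, a0 (((n : ℤ) + 1) + j)) ^ 2) ∧
    Summable (fun n : ℕ =>
      (∑ j ∈ Finset.range p, (b (n + 1 + j) - b0 (((n : ℤ) + 1) + j))) ^ 2) ∧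
    Summable (fun n : ℕ => (a (n + 1 + p) - a (n + 1)) ^ 2) ∧
    Summable (fun n : ℕ => (b (n + 1 + p) - b (n + 1)) ^ 2) := by
  obtain _ | m := p
  · simp
  obtain ⟨C, hC⟩ := hbdd
  have hA : ∏ j ∈ range (m + 1), a0 (j + 1) ≠ 0 :=
    prod_ne_zero_iff.mpr fun j _ => (ha0pos _).ne'
  have hprod := summable_sq_prod_sub_of_hilbertSchmidt a0 b0 hJ hS hHS hA
  have hsum := summable_sq_sum_sub_of_hilbertSchmidt a0 b0 hJ hS hHS hA fun n => (hC n).1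
  have hwinA (n : ℕ) :
      ∏ j ∈ range (m + 1), a0 ((n : ℤ) + 1 + j) = ∏ j ∈ range (m + 1), a0 (j + 1) := by
    rw [hpera.prod_range_add, ← hpera.prod_range_add 1]
    simp only [add_comm (1 : ℤ)]
  have hwinB (n : ℕ) :
      ∑ j ∈ range (m + 1), b0 ((n : ℤ) + 1 + j) = ∑ j ∈ range (m + 1), b0 (j + 1) := by
    rw [hperb.sum_range_add, ← hperb.sum_range_add 1]
    simp only [add_comm (1 : ℤ)]
  refine ⟨hprod.congr fun n => by rw [hwinA],
    hsum.congr fun n => by rw [sum_sub_distrib, hwinB],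
    summable_sq_sub_add_of_summable_sq_prod_sub (fun n => (hC n).1) hA hprod,
    summable_sq_sub_add_of_summable_sq_sum_sub hsum⟩

/-- consequences of `Δ_{J₀}(J) − S^p − S^{−p}` being
Hilbert–Schmidt. -/
theorem statement17 (p : ℕ) (hp : 2 ≤ p)
    (a0 b0 : ℤ → ℝ) (ha0pos : ∀ n, 0 < a0 n)
    (hpera : Function.Periodic a0 (p : ℤ)) (hperb : Function.Periodic b0 (p : ℤ))
    (a b : ℕ → ℝ) (hbdd : ∃ C : ℝ, ∀ n : ℕ, |a n| ≤ C ∧ |b n| ≤ C)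
    (hpos : ∀ n : ℕ, 1 ≤ n → 0 < a n)
    (J : HN →L[ℂ] HN) (hJ : IsHalfJacobi a b J)
    (S : HN →L[ℂ] HN) (hS : IsHalfShift S)
    (hHS : Summable (fun kl : ℕ × ℕ =>
      ‖entryN (polyOpN (disc a0 b0 p) J - S ^ p - (ContinuousLinearMap.adjoint S) ^ p)
        (kl.1 + 1) (kl.2 + 1)‖ ^ 2)) :
    Summable (fun n : ℕ =>
      ((∏ j ∈ Finset.range p, a (n + 1 + j)) -
        ∏ j ∈ Finset.range p, a0 (((n : ℤ) + 1) + j)) ^ 2) ∧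
    Summable (fun n : ℕ =>
      (∑ j ∈ Finset.range p, (b (n + 1 + j) - b0 (((n : ℤ) + 1) + j))) ^ 2) ∧
    Summable (fun n : ℕ => (a (n + 1 + p) - a (n + 1)) ^ 2) ∧
    Summable (fun n : ℕ => (b (n + 1 + p) - b (n + 1)) ^ 2) :=
  statement17_general p a0 b0 ha0pos hpera hperb a b hbdd J hJ S hS hHS
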